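/- Semi-stable versus range-related admissible: Let F = ⟨A, →⟩ be an AAF with n ≥ ℓ ≥ m and let η be a positive integer. Then (a) every ℓmn-η-semi-stable extension of F is an ℓmn-η-range-related admissible set of F; and (b) if moreover η ≥ ℓ, then every ℓmn-η-range-related admissible set of F is an ℓmn-η-semi-stable extension of F, so the two classes coincide. -/
import Mathlib


open Set

variable {A : Type*}

/-- Graded neutrality function `N_ℓ`: arguments not attacked by `ℓ` distinct members of `E`. -/
def gradedNeutrality (att : A → A → Prop) (ℓ : ℕ) (E : Set A) : Set A :=
  {a | ¬ ∃ B : Finset A, B.card = ℓ ∧ (↑B : Set A) ⊆ E ∧ ∀ b ∈ B, att b a}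

/-- Graded defense function `D_n^m = N_m ∘ N_n`. -/
def gradedDefense (att : A → A → Prop) (m n : ℕ) (E : Set A) : Set A :=
  gradedNeutrality att m (gradedNeutrality att n E)

/-- `E` is ℓ-conflict-free. -/
def IsConflictFree (att : A → A → Prop) (ℓ : ℕ) (E : Set A) : Prop :=
  E ⊆ gradedNeutrality att ℓ E

/-- `E` is ℓmn-admissible. -/
def IsAdmissible (att : A → A → Prop) (ℓ m n : ℕ) (E : Set A) : Prop :=
  E ⊆ gradedNeutrality att ℓ E ∧ E ⊆ gradedDefense att m n E

/-- `E` is an ℓmn-complete extension. -/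
def IsCompleteExt (att : A → A → Prop) (ℓ m n : ℕ) (E : Set A) : Prop :=
  E ⊆ gradedNeutrality att ℓ E ∧ E = gradedDefense att m n E

/-- `E` is an ℓmn-stable extension. -/
def IsStableExt (att : A → A → Prop) (ℓ m n : ℕ) (E : Set A) : Prop :=
  E = gradedNeutrality att n E ∧ E = gradedNeutrality att m E ∧
    E ⊆ gradedNeutrality att ℓ E

/-- The AAF is finitary: every argument has finitely many attackers. -/
def IsFinitary (att : A → A → Prop) : Prop :=
  ∀ a : A, {b | att b a}.Finite

/-- `E_η^+`: arguments attacked by `η` distinct members of `E`. -/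
def rangePlus (att : A → A → Prop) (η : ℕ) (E : Set A) : Set A :=
  {a | ∃ B : Finset A, B.card = η ∧ (↑B : Set A) ⊆ E ∧ ∀ b ∈ B, att b a}

/-- The range `E ∪ E_η^+` of `E`. -/
def rangeOf (att : A → A → Prop) (η : ℕ) (E : Set A) : Set A :=
  E ∪ rangePlus att η E

/-- Reduced meet of the family `X` modulo the ultrafilter `D`. -/
def reducedMeet {I : Type*} (D : Ultrafilter I) (X : I → Set A) : Set A :=
  {a | {i | a ∈ X i} ∈ D}

/-- `L` is the least fixed point of `f` containing `E`. -/
def IsLfpOver (f : Set A → Set A) (E L : Set A) : Prop :=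
  f L = L ∧ E ⊆ L ∧ ∀ L', f L' = L' → E ⊆ L' → L ⊆ L'

/-- `r` is well-founded on `S`: there is no infinite `r`-decreasing sequence in `S`. -/
def WellFoundedOnSet (r : A → A → Prop) (S : Set A) : Prop :=
  ¬ ∃ f : ℕ → A, (∀ i, f i ∈ S) ∧ ∀ i, r (f (i + 1)) (f i)

section Aux

variable {att : A → A → Prop} {ℓ m n η : ℕ} {E E' S : Set A} {a : A}

lemma neut_anti (h : E ⊆ E') : gradedNeutrality att ℓ E' ⊆ gradedNeutrality att ℓ E := by
  rintro a ha ⟨B, hc, hBE, hatt⟩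
  exact ha ⟨B, hc, hBE.trans h, hatt⟩

lemma neut_le (h : ℓ ≤ n) : gradedNeutrality att ℓ E ⊆ gradedNeutrality att n E := by
  rintro a ha ⟨B, hc, hBE, hatt⟩
  obtain ⟨B', hB', hc'⟩ := Finset.exists_subset_card_eq (hc ▸ h)
  exact ha ⟨B', hc', (Finset.coe_subset.2 hB').trans hBE, fun b hb => hatt b (hB' hb)⟩

lemma defense_mono (h : E ⊆ E') : gradedDefense att m n E ⊆ gradedDefense att m n E' :=
  neut_anti (neut_anti h)

/-- If `a` is `mn`-defended by `E` and `E ⊆ N_n(E)`, then `a` is not attacked by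
`k ≥ m` distinct members of `E`. -/
lemma no_big_attack {k : ℕ} (hk : m ≤ k) (hEn : E ⊆ gradedNeutrality att n E)
    (ha : a ∈ gradedDefense att m n E) :
    ¬ ∃ B : Finset A, B.card = k ∧ (↑B : Set A) ⊆ E ∧ ∀ b ∈ B, att b a := by
  rintro ⟨B, hc, hBE, hatt⟩
  obtain ⟨B', hB', hc'⟩ := Finset.exists_subset_card_eq (hc ▸ hk)
  exact ha ⟨B', hc', fun b hb => hEn (hBE (hB' hb)), fun b hb => hatt b (hB' hb)⟩

/-- Core conflict-freeness lemma: if `S ⊆ N_n(E)` and `c ∈ D_n^m(E)` then `c ∈ N_ℓ(S)`. -/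
lemma defense_neut (hml : m ≤ ℓ) (hS : S ⊆ gradedNeutrality att n E) {c : A}
    (hc : c ∈ gradedDefense att m n E) : c ∈ gradedNeutrality att ℓ S := by
  rintro ⟨B, hcard, hBS, hatt⟩
  obtain ⟨B', hB', hc'⟩ := Finset.exists_subset_card_eq (hcard ▸ hml)
  exact hc ⟨B', hc', fun b hb => hS (hBS (hB' hb)), fun b hb => hatt b (hB' hb)⟩

lemma adm_sub_neut_n (hln : ℓ ≤ n) (hE : IsAdmissible att ℓ m n E) :
    E ⊆ gradedNeutrality att n E := fun x hx => neut_le hln (hE.1 hx)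

/-- The graded fundamental lemma. -/
lemma fund (hml : m ≤ ℓ) (hln : ℓ ≤ n) (hE : IsAdmissible att ℓ m n E)
    (ha : a ∈ gradedDefense att m n E) : IsAdmissible att ℓ m n (insert a E) := by
  have hEn : E ⊆ gradedNeutrality att n E := adm_sub_neut_n hln hE
  have hS : insert a E ⊆ gradedNeutrality att n E := by
    rintro x (rfl | hx)
    · exact no_big_attack (hml.trans hln) hEn ha
    · exact hEn hx
  have hSD : insert a E ⊆ gradedDefense att m n E := by
    rintro x (rfl | hx)
    · exact ha
    · exact hE.2 hx
  constructor
  · intro c hc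
    exact defense_neut hml hS (hSD hc)
  · exact hSD.trans (defense_mono (Set.subset_insert a E))

lemma chain_finset {c : Set (Set A)} (hc : IsChain (· ⊆ ·) c) {T₀ : Set A} (hT₀ : T₀ ∈ c)
    (B : Finset A) (hB : (↑B : Set A) ⊆ ⋃₀ c) : ∃ T ∈ c, T₀ ⊆ T ∧ (↑B : Set A) ⊆ T := by
  classical
  induction B using Finset.induction with
  | empty => exact ⟨T₀, hT₀, subset_rfl, by simp⟩
  | @insert x B hx ih =>
    have hB' : (↑B : Set A) ⊆ ⋃₀ c := fun y hy => hB (by simpa using Or.inr hy)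
    obtain ⟨T, hTc, hT₀T, hBT⟩ := ih hB'
    obtain ⟨Tx, hTxc, hxTx⟩ := hB (Finset.mem_coe.2 (Finset.mem_insert_self x B))
    rcases hc.total hTc hTxc with h | h
    · exact ⟨Tx, hTxc, hT₀T.trans h, by
        rw [Finset.coe_insert]
        exact Set.insert_subset hxTx (hBT.trans h)⟩
    · exact ⟨T, hTc, hT₀T, by
        rw [Finset.coe_insert]
        exact Set.insert_subset (h hxTx) hBT⟩

/-- Every admissible set extends to a complete extension. -/
lemma exists_complete (hml : m ≤ ℓ) (hln : ℓ ≤ n) (hE : IsAdmissible att ℓ m n E) :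
    ∃ M : Set A, IsCompleteExt att ℓ m n M ∧ E ⊆ M := by
  have hzorn : ∀ c ⊆ {S : Set A | IsAdmissible att ℓ m n S}, IsChain (· ⊆ ·) c →
      c.Nonempty → ∃ ub ∈ {S : Set A | IsAdmissible att ℓ m n S}, ∀ s ∈ c, s ⊆ ub := by
    intro c hcS hchain hcne
    obtain ⟨T₀, hT₀⟩ := hcne
    refine ⟨⋃₀ c, ⟨?_, ?_⟩, fun s hs => Set.subset_sUnion_of_mem hs⟩
    · rintro x ⟨T, hTc, hxT⟩ ⟨B, hcard, hBc, hatt⟩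
      obtain ⟨T', hT'c, hTT', hBT'⟩ := chain_finset hchain hTc B hBc
      exact (hcS hT'c).1 (hTT' hxT) ⟨B, hcard, hBT', hatt⟩
    · rintro x ⟨T, hTc, hxT⟩
      exact defense_mono (Set.subset_sUnion_of_mem hTc) ((hcS hTc).2 hxT)
  obtain ⟨M, hEM, hMmem, hmax⟩ :=
    zorn_subset_nonempty {S : Set A | IsAdmissible att ℓ m n S} hzorn E hE
  have hM : IsAdmissible att ℓ m n M := hMmem
  refine ⟨M, ⟨hM.1, ?_⟩, hEM⟩
  apply Set.Subset.antisymm hM.2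
  intro a ha
  have hins : IsAdmissible att ℓ m n (insert a M) := fund hml hln hM ha
  exact hmax hins (Set.subset_insert a M) (Set.mem_insert a M)

lemma rangeOf_mono (h : E ⊆ E') : rangeOf att η E ⊆ rangeOf att η E' := by
  apply Set.union_subset_union h
  rintro a ⟨B, hc, hBE, hatt⟩
  exact ⟨B, hc, hBE.trans h, hatt⟩

end Aux

/-- Semi-stable versus range-related admissible: if `n ≥ ℓ ≥ m`, then (a) every
ℓmn-η-semi-stable extension is an ℓmn-η-range-related admissible set; and (b) if
moreover `η ≥ ℓ`, every ℓmn-η-range-related admissible set is an ℓmn-η-semi-stable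
extension. -/
theorem semiStable_vs_rangeRelatedAdmissible {A : Type*} [Nonempty A]
    (att : A → A → Prop)
    (ℓ m n η : ℕ) (hℓ : 0 < ℓ) (hm : 0 < m) (hn : 0 < n) (hη : 0 < η)
    (hml : m ≤ ℓ) (hln : ℓ ≤ n) :
    (∀ E : Set A,
      (IsCompleteExt att ℓ m n E ∧
        ¬ ∃ E' : Set A, IsCompleteExt att ℓ m n E' ∧
          rangeOf att η E ⊂ rangeOf att η E') →
      (IsAdmissible att ℓ m n E ∧
        ¬ ∃ E' : Set A, IsAdmissible att ℓ m n E' ∧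
          rangeOf att η E ⊂ rangeOf att η E')) ∧
    (ℓ ≤ η → ∀ E : Set A,
      (IsAdmissible att ℓ m n E ∧
        ¬ ∃ E' : Set A, IsAdmissible att ℓ m n E' ∧
          rangeOf att η E ⊂ rangeOf att η E') →
      (IsCompleteExt att ℓ m n E ∧
        ¬ ∃ E' : Set A, IsCompleteExt att ℓ m n E' ∧
          rangeOf att η E ⊂ rangeOf att η E')) := by
  constructor
  · -- (a) semi-stable ⇒ range-related admissible
    rintro E ⟨hE, hmax⟩
    have hadm : IsAdmissible att ℓ m n E := ⟨hE.1, hE.2.le⟩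
    refine ⟨hadm, ?_⟩
    rintro ⟨E', hE', hrange⟩
    obtain ⟨M, hM, hE'M⟩ := exists_complete hml hln hE'
    exact hmax ⟨M, hM, hrange.trans_subset (rangeOf_mono hE'M)⟩
  · -- (b) range-related admissible ⇒ semi-stable (needs ℓ ≤ η)
    rintro hlη E ⟨hE, hmax⟩
    have hEn : E ⊆ gradedNeutrality att n E := adm_sub_neut_n hln hE
    have hcomp : IsCompleteExt att ℓ m n E := by
      refine ⟨hE.1, Set.Subset.antisymm hE.2 ?_⟩
      intro a ha
      by_contra haE
      apply hmax
      refine ⟨insert a E, fund hml hln hE ha, ?_⟩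
      constructor
      · exact rangeOf_mono (Set.subset_insert a E)
      · intro hsub
        have : a ∈ rangeOf att η E := hsub (Or.inl (Set.mem_insert a E))
        rcases this with h | h
        · exact haE h
        · exact no_big_attack (hml.trans hlη) hEn ha h
    refine ⟨hcomp, ?_⟩
    rintro ⟨E', hE', hrange⟩
    exact hmax ⟨E', ⟨hE'.1, hE'.2.le⟩, hrange⟩
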